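/- arXiv:2312.05439 — 5 statements merged into one kernel-verified Lean document; each statement's English description precedes it below -/
import Mathlib

section
/- Consequently, I_n = 0 whenever n is odd, and I_{2m} = √2·π^{1/4}·√((2m-1)!!/(2m)!!) for all m ∈ ℕ, where I_n = ∫_ℝ ψ_n(ξ) dξ. -/
noncomputable def H : ℕ → ℝ → ℝ
  | 0, _ => 1
  | 1, x => 2 * x
  | n + 2, x => 2 * x * H (n + 1) x - 2 * ((n : ℝ) + 1) * H n x

noncomputable def ψ (n : ℕ) (ξ : ℝ) : ℝ :=
  (Real.sqrt (Real.sqrt Real.pi * 2 ^ n * n.factorial))⁻¹ * H n ξ * Real.exp (-ξ ^ 2 / 2)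

open MeasureTheory in
noncomputable def I (n : ℕ) : ℝ := ∫ ξ : ℝ, ψ n ξ

/-!
With `J n = ∫ H n x * exp (-x ^ 2 / 2) dx`, Gaussian integration by parts
`∫ x p(x) e^{-x²/2} = ∫ p'(x) e^{-x²/2}`, applied to the three-term recurrence together with
`H'_{n+1} = 2 (n + 1) H_n`, gives `J (n + 2) = 2 (n + 1) J n`. Since `J 0 = √(2π)` and `J 1 = 0`,
`J` vanishes at odd indices and `J (2m) = 2^m (2m-1)!! √(2π)`; dividing by the normalisation
constant and using `(2m)! = (2m)!! (2m-1)!!` gives the closed form.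
-/

open Polynomial MeasureTheory Real
open scoped Nat

noncomputable def physHermite : ℕ → ℝ[X]
  | 0 => 1
  | 1 => C 2 * X
  | n + 2 => C 2 * X * physHermite (n + 1) - C (2 * ((n : ℝ) + 1)) * physHermite n

lemma eval_physHermite : ∀ (n : ℕ) (x : ℝ), (physHermite n).eval x = H n x
  | 0, x => by simp [H, physHermite]
  | 1, x => by simp [H, physHermite]
  | n + 2, x => by
    simp only [H, physHermite, eval_sub, eval_mul, eval_C, eval_X, eval_physHermite (n + 1) x,
      eval_physHermite n x]

lemma derivative_physHermite_succ :
    ∀ n : ℕ, derivative (physHermite (n + 1)) = C (2 * ((n : ℝ) + 1)) * physHermite n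
  | 0 => by simp [physHermite]
  | 1 => by
    simp only [physHermite, derivative_sub, derivative_mul, derivative_C, derivative_X,
      derivative_one]
    simp only [map_mul, map_add, map_natCast, map_one, map_ofNat]
    ring
  | n + 2 => by
    have hrec : physHermite (n + 3) = C 2 * X * physHermite (n + 2)
        - C (2 * (((n + 1 : ℕ) : ℝ) + 1)) * physHermite (n + 1) := rfl
    have hprev : physHermite (n + 2) =
        C 2 * X * physHermite (n + 1) - C (2 * ((n : ℝ) + 1)) * physHermite n := rfl
    rw [hrec, derivative_sub, derivative_mul, derivative_mul, derivative_mul,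
      derivative_physHermite_succ (n + 1), derivative_physHermite_succ n, hprev]
    simp only [derivative_C, derivative_X]
    simp only [map_mul, map_add, map_natCast, map_one, map_ofNat]
    push_cast
    ring

lemma integrable_eval_mul_exp_neg_mul_sq {b : ℝ} (hb : 0 < b) (p : ℝ[X]) :
    Integrable fun x : ℝ => p.eval x * exp (-b * x ^ 2) := by
  induction p using Polynomial.induction_on' with
  | add p q hp hq =>
    refine (hp.add hq).congr (ae_of_all _ fun x => ?_)
    simp only [Pi.add_apply, eval_add, add_mul]
  | monomial n c =>
    have hpow := (integrable_rpow_mul_exp_neg_mul_sq hb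
      (by linarith [n.cast_nonneg (α := ℝ)] : (-1 : ℝ) < n)).const_mul c
    simpa only [rpow_natCast, eval_monomial, mul_assoc] using hpow

lemma integrable_eval_mul_gaussian (p : ℝ[X]) :
    Integrable fun x : ℝ => p.eval x * exp (-x ^ 2 / 2) := by
  simpa only [neg_mul, one_div, inv_mul_eq_div, neg_div] using
    integrable_eval_mul_exp_neg_mul_sq (by norm_num : (0 : ℝ) < 1 / 2) p

noncomputable def gaussianPairing : ℝ[X] →ₗ[ℝ] ℝ where
  toFun p := ∫ x, p.eval x * exp (-x ^ 2 / 2)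
  map_add' p q := by
    simp only [eval_add, add_mul]
    exact integral_add (integrable_eval_mul_gaussian p) (integrable_eval_mul_gaussian q)
  map_smul' c p := by
    simp only [eval_smul, smul_eq_mul, mul_assoc, RingHom.id_apply]
    exact integral_const_mul c _

lemma gaussianPairing_apply (p : ℝ[X]) :
    gaussianPairing p = ∫ x, p.eval x * exp (-x ^ 2 / 2) := rfl

lemma gaussianPairing_one : gaussianPairing 1 = √(2 * π) := by
  have h := integral_gaussian (1 / 2)
  rw [gaussianPairing_apply]
  convert h using 2 with x
  · simp only [eval_one, one_mul]; ring_nf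
  · ring

lemma hasDerivAt_eval_mul_gaussian (p : ℝ[X]) (x : ℝ) :
    HasDerivAt (fun x : ℝ => p.eval x * exp (-x ^ 2 / 2))
      ((derivative p - X * p).eval x * exp (-x ^ 2 / 2)) x := by
  have hexponent : HasDerivAt (fun x : ℝ => -x ^ 2 / 2) (-x) x :=
    ((hasDerivAt_pow 2 x).neg.div_const 2).congr_deriv (by ring)
  refine ((p.hasDerivAt x).mul hexponent.exp).congr_deriv ?_
  simp only [eval_sub, eval_mul, eval_X]
  ring

lemma gaussianPairing_X_mul (p : ℝ[X]) :
    gaussianPairing (X * p) = gaussianPairing (derivative p) := by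
  have h := integral_eq_zero_of_hasDerivAt_of_integrable (hasDerivAt_eval_mul_gaussian p)
    (integrable_eval_mul_gaussian _) (integrable_eval_mul_gaussian p)
  rw [← gaussianPairing_apply, map_sub] at h
  linarith

lemma gaussianPairing_physHermite_add_two (n : ℕ) :
    gaussianPairing (physHermite (n + 2)) = 2 * (n + 1) * gaussianPairing (physHermite n) := by
  have hrec : physHermite (n + 2) = (2 : ℝ) • (X * physHermite (n + 1))
      - (2 * ((n : ℝ) + 1)) • physHermite n := by
    simp only [smul_eq_C_mul, ← mul_assoc]; rfl
  rw [hrec, map_sub, map_smul, map_smul, gaussianPairing_X_mul, derivative_physHermite_succ,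
    ← smul_eq_C_mul, map_smul, smul_eq_mul, smul_eq_mul]
  ring

lemma gaussianPairing_physHermite_two_mul_add_one :
    ∀ k : ℕ, gaussianPairing (physHermite (2 * k + 1)) = 0
  | 0 => by
    have h : physHermite 1 = (2 : ℝ) • (X * 1) := by
      rw [mul_one, smul_eq_C_mul]; rfl
    rw [h, map_smul, gaussianPairing_X_mul, derivative_one, map_zero, smul_zero]
  | k + 1 => by
    rw [show 2 * (k + 1) + 1 = 2 * k + 1 + 2 by ring, gaussianPairing_physHermite_add_two,
      gaussianPairing_physHermite_two_mul_add_one k, mul_zero]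

lemma gaussianPairing_physHermite_two_mul :
    ∀ m : ℕ, gaussianPairing (physHermite (2 * m)) = 2 ^ m * (2 * m - 1)‼ * √(2 * π)
  | 0 => by simpa [physHermite] using gaussianPairing_one
  | m + 1 => by
    rw [show 2 * (m + 1) = 2 * m + 2 by ring, gaussianPairing_physHermite_add_two,
      gaussianPairing_physHermite_two_mul m, show 2 * m + 2 - 1 = 2 * m + 1 by omega,
      Nat.doubleFactorial_add_one]
    push_cast
    ring

lemma I_eq_gaussianPairing (n : ℕ) :
    I n = (√(√π * 2 ^ n * n !))⁻¹ * gaussianPairing (physHermite n) := by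
  rw [gaussianPairing_apply, ← integral_const_mul]
  refine integral_congr_ae (ae_of_all _ fun x => ?_)
  simp only [ψ, eval_physHermite, mul_assoc]

lemma factorial_two_mul_eq_doubleFactorial_mul (m : ℕ) : (2 * m)! = (2 * m)‼ * (2 * m - 1)‼ := by
  rcases m with _ | m
  · rfl
  · rw [show 2 * (m + 1) = 2 * m + 1 + 1 by ring, Nat.factorial_eq_mul_doubleFactorial]
    rfl

lemma sqrt_pi_eq_sq : √π = (π ^ ((1 : ℝ) / 4)) ^ 2 := by
  rw [sqrt_eq_rpow, ← rpow_natCast, ← rpow_mul pi_pos.le]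
  norm_num

lemma sqrt_normalization_two_mul (m : ℕ) :
    √(√π * 2 ^ (2 * m) * (2 * m)!) = π ^ ((1 : ℝ) / 4) * 2 ^ m * √(2 * m)‼ * √(2 * m - 1)‼ := by
  rw [sqrt_eq_iff_mul_self_eq_of_pos (by positivity), factorial_two_mul_eq_doubleFactorial_mul,
    Nat.cast_mul, sqrt_pi_eq_sq]
  linear_combination (2 ^ m * π ^ ((1 : ℝ) / 4)) ^ 2 *
    ((√(2 * m - 1)‼) ^ 2 * sq_sqrt (Nat.cast_nonneg (2 * m)‼)
      + ((2 * m)‼ : ℝ) * sq_sqrt (Nat.cast_nonneg (2 * m - 1)‼))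

theorem sw_hermite_integral_closed_form :
    (∀ n : ℕ, Odd n → I n = 0) ∧
      ∀ m : ℕ, I (2 * m) = Real.sqrt 2 * Real.pi ^ ((1 : ℝ) / 4) *
        Real.sqrt (((2 * m - 1 : ℕ).doubleFactorial : ℝ) / ((2 * m).doubleFactorial : ℝ)) := by
  refine ⟨fun n ⟨k, hk⟩ => ?_, fun m => ?_⟩
  · rw [hk, I_eq_gaussianPairing, gaussianPairing_physHermite_two_mul_add_one, mul_zero]
  have hodd : (0 : ℝ) < (2 * m - 1)‼ := mod_cast Nat.doubleFactorial_pos _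
  rw [I_eq_gaussianPairing, gaussianPairing_physHermite_two_mul, sqrt_normalization_two_mul,
    sqrt_mul zero_le_two, sqrt_pi_eq_sq, sqrt_div hodd.le]
  field_simp
  linear_combination -sq_sqrt hodd.le
end

section
/- Let D ∈ ℝ^{N×N} be skew-symmetric with D𝟙 = 0, and suppose C_0, ..., C_{N_v-1} : ℝ → ℝᴺ and E : ℝ → ℝᴺ satisfy dC_n/dt = -D Q_n - (q/(mα)) E ⊙ (√(n/2) C_{n-1} - √((n+1)/2) C_{n+1}), where Q_n = α√(n/2) C_{n-1} + α√((n+1)/2) C_{n+1} + u C_n, C_{-1} = C_{N_v} = 0, and ⊙ is the entrywise product. Then d/dt Σ_{n=0}^{N_v-1} ⟨C_n, C_n⟩ = 0. -/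
/-!
Along the flow, `d/dt Σ ⟨Cₙ, Cₙ⟩ = 2 Σ ⟨Cₙ, Ċₙ⟩`. The right-hand side couples only neighbouring
Hermite modes, through the skew-symmetric `D` and the symmetric multiplication by `E`, with
coefficients arranged so that the block-tridiagonal generator is skew-adjoint. Concretely
`⟨Cₙ, Ċₙ⟩ = Hₙ₊₁ - Hₙ` for a flux `Hₙ` coupling modes `n - 1` and `n`, and the sum telescopes
to `H_{N_v} - H₀ = 0` because `C_{N_v} = 0` and the coefficient `√(0/2)` vanishes.
-/

open Matrix Finset

namespace Matrix

variable {ι R : Type*} [Fintype ι]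

theorem dotProduct_mulVec_eq_neg_of_transpose_eq_neg [CommRing R] {D : Matrix ι ι R}
    (hD : Dᵀ = -D) (x y : ι → R) : x ⬝ᵥ (D *ᵥ y) = -(y ⬝ᵥ (D *ᵥ x)) := by
  rw [dotProduct_mulVec, ← mulVec_transpose, hD, neg_mulVec, neg_dotProduct, dotProduct_comm]

theorem dotProduct_mulVec_self_eq_zero_of_transpose_eq_neg {D : Matrix ι ι ℝ}
    (hD : Dᵀ = -D) (x : ι → ℝ) : x ⬝ᵥ (D *ᵥ x) = 0 := by
  linarith [dotProduct_mulVec_eq_neg_of_transpose_eq_neg hD x x]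

theorem dotProduct_mul_comm [CommSemiring R] (x e y : ι → R) :
    x ⬝ᵥ (e * y) = y ⬝ᵥ (e * x) :=
  Finset.sum_congr rfl fun _ _ => by simp only [Pi.mul_apply]; ring

end Matrix

theorem HasDerivAt.dotProduct {ι 𝕜 : Type*} [Fintype ι] [NontriviallyNormedField 𝕜]
    {f g : 𝕜 → ι → 𝕜} {f' g' : ι → 𝕜} {t : 𝕜}
    (hf : HasDerivAt f f' t) (hg : HasDerivAt g g' t) :
    HasDerivAt (fun t => f t ⬝ᵥ g t) (f' ⬝ᵥ g t + f t ⬝ᵥ g') t := by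
  simp only [_root_.dotProduct, ← Finset.sum_add_distrib]
  exact HasDerivAt.fun_sum fun i _ => (hasDerivAt_pi.mp hf i).mul (hasDerivAt_pi.mp hg i)

section HermiteTridiagonal

variable {ι : Type*} [Fintype ι] (D : Matrix ι ι ℝ) (E : ι → ℝ) (α u c : ℝ) (a : ℕ → ℝ)
  (C : ℕ → ι → ℝ)

/-- The paper's right-hand side is `a n = √(n/2)`, `c = q/(mα)`. At `n = 0`, `C (n - 1)` is `C 0`
(truncated subtraction), so the closure `C₋₁ = 0` is encoded by `a 0 = 0`. -/
def hermiteRhs (n : ℕ) : ι → ℝ :=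
  -(D *ᵥ ((α * a n) • C (n - 1) + (α * a (n + 1)) • C (n + 1) + u • C n))
    - c • (E * (a n • C (n - 1) - a (n + 1) • C (n + 1)))

def hermiteFlux (n : ℕ) : ℝ :=
  a n * (c * (C (n - 1) ⬝ᵥ (E * C n)) - α * (C (n - 1) ⬝ᵥ (D *ᵥ C n)))

variable {D}

theorem dotProduct_hermiteRhs (hD : Dᵀ = -D) (n : ℕ) :
    C n ⬝ᵥ hermiteRhs D E α u c a C n
      = hermiteFlux D E α c a C (n + 1) - hermiteFlux D E α c a C n := by
  simp only [hermiteRhs, hermiteFlux, Nat.add_sub_cancel, mulVec_add, mulVec_smul, dotProduct_add,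
    dotProduct_sub, dotProduct_neg, dotProduct_smul, mul_sub, mul_smul_comm, smul_sub, smul_eq_mul,
    dotProduct_mulVec_self_eq_zero_of_transpose_eq_neg hD,
    dotProduct_mulVec_eq_neg_of_transpose_eq_neg hD (C n) (C (n - 1)),
    dotProduct_mul_comm (C n) E (C (n - 1))]
  ring

theorem sum_dotProduct_hermiteRhs_eq_zero (hD : Dᵀ = -D) (ha : a 0 = 0) {Nv : ℕ}
    (hCtop : C Nv = 0) :
    ∑ n ∈ range Nv, C n ⬝ᵥ hermiteRhs D E α u c a C n = 0 := by
  have hflux_top : hermiteFlux D E α c a C Nv = 0 := by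
    simp [hermiteFlux, hCtop]
  have hflux_zero : hermiteFlux D E α c a C 0 = 0 := by
    simp [hermiteFlux, ha]
  simp only [dotProduct_hermiteRhs E α u c a C hD, Finset.sum_range_sub, hflux_top,
    hflux_zero, sub_zero]

end HermiteTridiagonal

theorem sw_semidiscrete_norm_invariant_general {N : ℕ} (Nv : ℕ)
    (D : Matrix (Fin N) (Fin N) ℝ) (hD : Dᵀ = -D)
    (α u q m : ℝ)
    (C : ℕ → ℝ → Fin N → ℝ) (E : ℝ → Fin N → ℝ)
    (hCtop : ∀ t, C Nv t = 0)
    (Q : ℕ → ℝ → Fin N → ℝ)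
    (hQ : ∀ n t, Q n t = (α * Real.sqrt ((n : ℝ) / 2)) • C (n - 1) t
        + (α * Real.sqrt (((n : ℝ) + 1) / 2)) • C (n + 1) t + u • C n t)
    (hevol : ∀ n < Nv, ∀ t, HasDerivAt (C n)
        (-(D.mulVec (Q n t)) - (q / (m * α)) • (E t *
          (Real.sqrt ((n : ℝ) / 2) • C (n - 1) t
            - Real.sqrt (((n : ℝ) + 1) / 2) • C (n + 1) t))) t) :
    ∀ t, HasDerivAt (fun t => ∑ n ∈ range Nv, C n t ⬝ᵥ C n t) 0 t := by
  intro t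
  set a : ℕ → ℝ := fun n => Real.sqrt ((n : ℝ) / 2)
  set rhs := hermiteRhs D (E t) α u (q / (m * α)) a (fun n => C n t)
  have hderiv : ∀ n < Nv, HasDerivAt (C n) (rhs n) t := by
    intro n hn
    convert hevol n hn t using 1
    simp only [rhs, hermiteRhs, hQ, a, Nat.cast_succ]
  have hsum : HasDerivAt (fun t => ∑ n ∈ range Nv, C n t ⬝ᵥ C n t)
      (∑ n ∈ range Nv, (rhs n ⬝ᵥ C n t + C n t ⬝ᵥ rhs n)) t :=
    HasDerivAt.fun_sum fun n hn =>
      (hderiv n (mem_range.mp hn)).dotProduct (hderiv n (mem_range.mp hn))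
  simp only [dotProduct_comm (rhs _), ← two_mul, ← Finset.mul_sum] at hsum
  rwa [sum_dotProduct_hermiteRhs_eq_zero (E t) α u _ a _ hD (by simp [a]) (hCtop t),
    mul_zero] at hsum

theorem sw_semidiscrete_norm_invariant {N : ℕ} (Nv : ℕ)
    (D : Matrix (Fin N) (Fin N) ℝ) (hD : Dᵀ = -D)
    (hD1 : D.mulVec (fun _ => (1 : ℝ)) = 0)
    (α u q m : ℝ) (hα : 0 < α) (hm : m ≠ 0)
    (C : ℕ → ℝ → Fin N → ℝ) (E : ℝ → Fin N → ℝ)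
    (hCtop : ∀ t, C Nv t = 0)
    (Q : ℕ → ℝ → Fin N → ℝ)
    (hQ : ∀ n t, Q n t = (α * Real.sqrt ((n : ℝ) / 2)) • C (n - 1) t
        + (α * Real.sqrt (((n : ℝ) + 1) / 2)) • C (n + 1) t + u • C n t)
    (hevol : ∀ n < Nv, ∀ t, HasDerivAt (C n)
        (-(D.mulVec (Q n t)) - (q / (m * α)) • (E t *
          (Real.sqrt ((n : ℝ) / 2) • C (n - 1) t
            - Real.sqrt (((n : ℝ) + 1) / 2) • C (n + 1) t))) t) :
    ∀ t, HasDerivAt (fun t => ∑ n ∈ range Nv, C n t ⬝ᵥ C n t) 0 t :=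
  sw_semidiscrete_norm_invariant_general Nv D hD α u q m C E hCtop Q hQ hevol
end

section
/- In the setting of the semi-discrete SW Vlasov system with closure by truncation, the particle number N(t) = Δx·α·Σ_{n=0}^{N_v-1} I_n·𝟙ᵀC_n(t) satisfies dN/dt = 0 when N_v is odd, and dN/dt = -Δx·(q/m)·√((N_v-1)/2)·I_{N_v-2}·E(t)ᵀ C_{N_v-1}(t) when N_v is even. -/
/-!
As `D` is skew-symmetric with `D 𝟙 = 0`, also `𝟙ᵀ D = 0`, so the transport term drops out of
`d/dt 𝟙ᵀ C n`. Up to the factor `q / (m α)`, what is left of the `n`-th equation weighted by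
`I n` is `g n - g (n + 2)` with `g n = I n √(n/2) Eᵀ C (n-1)`: the recursion for `I` turns
`I n √((n+1)/2)` into `I (n+2) √((n+2)/2)`. The sum over `n < Nv` telescopes, and as `g 0`,
`g 1` and `g (Nv + 1)` vanish, only `-g Nv` survives. It is zero for odd `Nv` because `I`
vanishes at odd indices, and for even `Nv` the recursion rewrites it as
`-√((Nv-1)/2) I (Nv-2) Eᵀ C (Nv-1)`.
-/

open Matrix Finset

theorem Finset.sum_range_sub_add_two {M : Type*} [AddCommGroup M] (g : ℕ → M) (k : ℕ) :
    ∑ n ∈ range k, (g n - g (n + 2)) = g 0 + g 1 - (g k + g (k + 1)) := by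
  rw [← Finset.sum_range_sub' (fun n => g n + g (n + 1)) k]
  exact sum_congr rfl fun n _ => by abel

section DotProduct

variable {ι R : Type*} [Fintype ι]

theorem HasDerivAt.const_dotProduct {f : ℝ → ι → ℝ} {f' : ι → ℝ} {t : ℝ}
    (hf : HasDerivAt f f' t) (v : ι → ℝ) :
    HasDerivAt (fun t => v ⬝ᵥ f t) (v ⬝ᵥ f') t :=
  HasDerivAt.fun_sum fun i _ => (hasDerivAt_pi.mp hf i).const_mul (v i)

theorem one_dotProduct_mul [NonAssocSemiring R] (e x : ι → R) :
    1 ⬝ᵥ (e * x) = e ⬝ᵥ x := by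
  simp [dotProduct]

theorem one_dotProduct_mulVec_eq_zero [CommRing R] {D : Matrix ι ι R} (hD : Dᵀ = -D)
    (hD1 : D *ᵥ 1 = 0) (x : ι → R) : 1 ⬝ᵥ D *ᵥ x = 0 := by
  rw [dotProduct_mulVec, ← mulVec_transpose, hD, neg_mulVec, hD1, neg_zero, zero_dotProduct]

theorem hasDerivAt_one_dotProduct_of_skew {D : Matrix ι ι ℝ} (hD : Dᵀ = -D) (hD1 : D *ᵥ 1 = 0)
    {c : ℝ → ι → ℝ} {w e x y : ι → ℝ} {k a b t : ℝ}
    (hc : HasDerivAt c (-(D *ᵥ w) + k • (e * (a • x - b • y))) t) :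
    HasDerivAt (fun t => 1 ⬝ᵥ c t) (k * (a * (e ⬝ᵥ x) - b * (e ⬝ᵥ y))) t := by
  convert hc.const_dotProduct 1 using 1
  rw [dotProduct_add, dotProduct_neg, one_dotProduct_mulVec_eq_zero hD hD1, dotProduct_smul,
    one_dotProduct_mul, dotProduct_sub, dotProduct_smul, dotProduct_smul]
  simp

end DotProduct

section HermiteMoments

variable {I : ℕ → ℝ}

theorem mul_sqrt_half_eq_of_rec
    (hIrec : ∀ n : ℕ, 2 ≤ n → I n = √(((n : ℝ) - 1) / n) * I (n - 2)) {n : ℕ} (hn : 2 ≤ n) :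
    I n * √((n : ℝ) / 2) = √(((n : ℝ) - 1) / 2) * I (n - 2) := by
  have hn' : (2 : ℝ) ≤ n := by exact_mod_cast hn
  rw [hIrec n hn, mul_right_comm, ← Real.sqrt_mul (div_nonneg (by linarith) (by linarith))]
  congr 2
  field_simp

theorem eq_zero_of_odd_of_rec
    (hIrec : ∀ n : ℕ, 2 ≤ n → I n = √(((n : ℝ) - 1) / n) * I (n - 2)) (hI1 : I 1 = 0)
    {n : ℕ} (hn : Odd n) : I n = 0 := by
  obtain ⟨k, rfl⟩ := hn
  induction k with
  | zero => exact hI1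
  | succ k ih =>
    rw [hIrec _ (by omega), show 2 * (k + 1) + 1 - 2 = 2 * k + 1 by omega, ih, mul_zero]

end HermiteMoments

theorem hasDerivAt_particle_number {N : ℕ} (Nv : ℕ)
    {D : Matrix (Fin N) (Fin N) ℝ} (hD : Dᵀ = -D) (hD1 : D *ᵥ 1 = 0)
    {Δx α q m : ℝ} (hα : α ≠ 0) {I : ℕ → ℝ} (hI1 : I 1 = 0)
    (hIrec : ∀ n : ℕ, 2 ≤ n → I n = √(((n : ℝ) - 1) / n) * I (n - 2))
    {C Q : ℕ → ℝ → Fin N → ℝ} {E : ℝ → Fin N → ℝ} (hCtop : ∀ t, C Nv t = 0)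
    (hevol : ∀ n < Nv, ∀ t, HasDerivAt (C n)
        (-(D *ᵥ Q n t) + (q / (m * α)) • (E t *
          (√((n : ℝ) / 2) • C (n - 1) t - √(((n : ℝ) + 1) / 2) • C (n + 1) t))) t)
    (t : ℝ) :
    HasDerivAt (fun t => Δx * α * ∑ n ∈ range Nv, I n * (1 ⬝ᵥ C n t))
      (-(Δx * (q / m) * (I Nv * √((Nv : ℝ) / 2) * (E t ⬝ᵥ C (Nv - 1) t)))) t := by
  set g : ℕ → ℝ := fun n => I n * √((n : ℝ) / 2) * (E t ⬝ᵥ C (n - 1) t) with hg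
  have hterm : ∀ n ∈ range Nv, HasDerivAt (fun t => I n * (1 ⬝ᵥ C n t))
      (q / (m * α) * (g n - g (n + 2))) t := by
    intro n hn
    refine ((hasDerivAt_one_dotProduct_of_skew hD hD1
      (hevol n (mem_range.mp hn) t)).const_mul (I n)).congr_deriv ?_
    have hshift := mul_sqrt_half_eq_of_rec hIrec (n := n + 2) (by omega)
    simp only [hg, Nat.add_sub_cancel, Nat.cast_add, Nat.cast_ofNat, add_sub_assoc,
      show n + 2 - 1 = n + 1 by omega, show (2 : ℝ) - 1 = 1 by norm_num] at hshift ⊢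
    rw [hshift]
    ring
  have hg0 : g 0 = 0 := by simp [hg]
  have hg1 : g 1 = 0 := by simp [hg, hI1]
  have hgtop : g (Nv + 1) = 0 := by simp [hg, hCtop]
  refine ((HasDerivAt.fun_sum hterm).const_mul (Δx * α)).congr_deriv ?_
  rw [← mul_sum, sum_range_sub_add_two, hg0, hg1, hgtop]
  field_simp
  ring

theorem sw_particle_number_drift_general {N : ℕ} (Nv : ℕ)
    (D : Matrix (Fin N) (Fin N) ℝ) (hD : Dᵀ = -D)
    (hD1 : D.mulVec (fun _ => (1 : ℝ)) = 0)
    (Δx α q m : ℝ) (hα : 0 < α)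
    (I : ℕ → ℝ)
    (hI1 : I 1 = 0)
    (hIrec : ∀ n : ℕ, 2 ≤ n → I n = Real.sqrt (((n : ℝ) - 1) / n) * I (n - 2))
    (C : ℕ → ℝ → Fin N → ℝ) (E : ℝ → Fin N → ℝ)
    (hCtop : ∀ t, C Nv t = 0)
    (Q : ℕ → ℝ → Fin N → ℝ)
    (hevol : ∀ n < Nv, ∀ t, HasDerivAt (C n)
        (-(D.mulVec (Q n t)) + (q / (m * α)) • (E t *
          (Real.sqrt ((n : ℝ) / 2) • C (n - 1) t
            - Real.sqrt (((n : ℝ) + 1) / 2) • C (n + 1) t))) t) :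
    (Odd Nv → ∀ t, HasDerivAt
      (fun t => Δx * α * ∑ n ∈ range Nv, I n * ((fun _ => (1 : ℝ)) ⬝ᵥ C n t)) 0 t) ∧
    (Even Nv → ∀ t, HasDerivAt
      (fun t => Δx * α * ∑ n ∈ range Nv, I n * ((fun _ => (1 : ℝ)) ⬝ᵥ C n t))
      (-(Δx * (q / m) * Real.sqrt (((Nv : ℝ) - 1) / 2) * I (Nv - 2) *
        (E t ⬝ᵥ C (Nv - 1) t))) t) := by
  have hN := hasDerivAt_particle_number (Δx := Δx) Nv hD hD1 hα.ne' hI1 hIrec hCtop hevol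
  refine ⟨fun hodd t => ?_, fun heven t => ?_⟩
  · exact (hN t).congr_deriv (by simp [eq_zero_of_odd_of_rec hIrec hI1 hodd])
  · refine (hN t).congr_deriv ?_
    obtain rfl | hNv : Nv = 0 ∨ 2 ≤ Nv := by
      obtain ⟨k, rfl⟩ := heven
      omega
    · simp [hCtop]
    · rw [mul_sqrt_half_eq_of_rec hIrec hNv]
      ring

theorem sw_particle_number_drift {N : ℕ} (Nv : ℕ) (hNv : 1 ≤ Nv)
    (D : Matrix (Fin N) (Fin N) ℝ) (hD : Dᵀ = -D)
    (hD1 : D.mulVec (fun _ => (1 : ℝ)) = 0)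
    (Δx α u q m : ℝ) (hα : 0 < α) (hm : m ≠ 0)
    (I : ℕ → ℝ)
    (hI0 : I 0 = Real.sqrt 2 * Real.pi ^ ((1 : ℝ) / 4)) (hI1 : I 1 = 0)
    (hIrec : ∀ n : ℕ, 2 ≤ n → I n = Real.sqrt (((n : ℝ) - 1) / n) * I (n - 2))
    (C : ℕ → ℝ → Fin N → ℝ) (E : ℝ → Fin N → ℝ)
    (hCtop : ∀ t, C Nv t = 0)
    (Q : ℕ → ℝ → Fin N → ℝ)
    (hQ : ∀ n t, Q n t = (α * Real.sqrt ((n : ℝ) / 2)) • C (n - 1) t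
        + (α * Real.sqrt (((n : ℝ) + 1) / 2)) • C (n + 1) t + u • C n t)
    (hevol : ∀ n < Nv, ∀ t, HasDerivAt (C n)
        (-(D.mulVec (Q n t)) + (q / (m * α)) • (E t *
          (Real.sqrt ((n : ℝ) / 2) • C (n - 1) t
            - Real.sqrt (((n : ℝ) + 1) / 2) • C (n + 1) t))) t) :
    (Odd Nv → ∀ t, HasDerivAt
      (fun t => Δx * α * ∑ n ∈ range Nv, I n * ((fun _ => (1 : ℝ)) ⬝ᵥ C n t)) 0 t) ∧
    (Even Nv → ∀ t, HasDerivAt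
      (fun t => Δx * α * ∑ n ∈ range Nv, I n * ((fun _ => (1 : ℝ)) ⬝ᵥ C n t))
      (-(Δx * (q / m) * Real.sqrt (((Nv : ℝ) - 1) / 2) * I (Nv - 2) *
        (E t ⬝ᵥ C (Nv - 1) t))) t) :=
  sw_particle_number_drift_general Nv D hD hD1 Δx α q m hα I hI1 hIrec C E hCtop Q hevol
end

section
/- Telescoping identity for the square-root formulation momentum: for vectors C_0, ..., C_{N_v-1} ∈ ℝᴺ with C_{-1} = C_{N_v} = 0 evolving under the semi-discrete SW square-root Vlasov system, Σ_{n=0}^{N_v-1} √(n/2)·(C_nᵀ (dC_{n-1}/dt) + C_{n-1}ᵀ (dC_n/dt)) = (q/(2mα))·Eᵀ·((Σ_{n=0}^{N_v-1} C_n⊙C_n) - N_v·C_{N_v-1}⊙C_{N_v-1}), where ⊙ denotes the entrywise product and Eᵀ(x⊙y) abbreviates Σ_j E_j x_j y_j. -/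
open Matrix Finset

theorem sw_sqrt_momentum_telescoping {N : ℕ} (Nv : ℕ) (hNv : 1 ≤ Nv)
    (D : Matrix (Fin N) (Fin N) ℝ) (hD : Dᵀ = -D)
    (α u q m : ℝ) (hα : 0 < α) (hm : m ≠ 0)
    (C : ℕ → Fin N → ℝ) (E : Fin N → ℝ)
    (hCtop : C Nv = 0)
    (Q : ℕ → Fin N → ℝ)
    (hQ : ∀ n, Q n = (α * Real.sqrt ((n : ℝ) / 2)) • C (n - 1)
        + (α * Real.sqrt (((n : ℝ) + 1) / 2)) • C (n + 1) + u • C n)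
    (C' : ℕ → Fin N → ℝ)
    (hC' : ∀ n < Nv, C' n = -(D.mulVec (Q n)) + (q / (m * α)) • (E *
        (Real.sqrt ((n : ℝ) / 2) • C (n - 1)
          - Real.sqrt (((n : ℝ) + 1) / 2) • C (n + 1)))) :
    ∑ n ∈ range Nv, Real.sqrt ((n : ℝ) / 2) *
        (C n ⬝ᵥ C' (n - 1) + C (n - 1) ⬝ᵥ C' n) =
      (q / (2 * m * α)) * (E ⬝ᵥ ((∑ n ∈ range Nv, C n * C n)
        - (Nv : ℝ) • (C (Nv - 1) * C (Nv - 1)))) := by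
  have hα' : (α : ℝ) ≠ 0 := ne_of_gt hα
  set c : ℝ := q / (m * α) with hc
  set s : ℕ → ℝ := fun n => Real.sqrt ((n : ℝ) / 2) with hs
  have hs0 : s 0 = 0 := by simp [hs]
  have hssq : ∀ n : ℕ, s n * s n = (n : ℝ) / 2 := by
    intro n
    exact Real.mul_self_sqrt (by positivity)
  -- skew symmetry
  have skew : ∀ x y : Fin N → ℝ, x ⬝ᵥ D.mulVec y = -(y ⬝ᵥ D.mulVec x) := by
    intro x y
    rw [Matrix.dotProduct_mulVec, ← Matrix.mulVec_transpose, hD, Matrix.neg_mulVec,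
      neg_dotProduct, dotProduct_comm]
  have self0 : ∀ x : Fin N → ℝ, x ⬝ᵥ D.mulVec x = 0 := fun x => by
    have := skew x x; linarith
  -- E-weighted product lemma
  have Edot : ∀ x y : Fin N → ℝ, x ⬝ᵥ (E * y) = E ⬝ᵥ (x * y) := by
    intro x y
    refine Finset.sum_congr rfl fun i _ => by simp [Pi.mul_apply]; ring
  set f : ℕ → ℝ := fun n => E ⬝ᵥ (C n * C n) with hf
  set a : ℕ → ℝ := fun n => s n * s (n + 1) * (C (n - 1) ⬝ᵥ D.mulVec (C (n + 1))) with ha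
  set b : ℕ → ℝ := fun n => s n * s (n + 1) * (E ⬝ᵥ (C (n - 1) * C (n + 1))) with hb
  set g : ℕ → ℝ := fun n => α * a (n - 1) + c * b (n - 1) with hg
  have key : ∀ n < Nv, Real.sqrt ((n : ℝ) / 2) *
      (C n ⬝ᵥ C' (n - 1) + C (n - 1) ⬝ᵥ C' n) =
      (g n - g (n + 1)) + c * ((n : ℝ) / 2) * (f (n - 1) - f n) := by
    intro n hn
    match n, hn with
    | 0, hn =>
      norm_num [hg]
    | (n+1), hn =>
      simp only [Nat.add_sub_cancel]
      rw [hC' (n+1) hn, hC' n (by omega), hQ n, hQ (n+1)]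
      simp only [mul_sub, mul_smul_comm, dotProduct_add, dotProduct_sub,
        dotProduct_neg, dotProduct_smul, Matrix.mulVec_add, Matrix.mulVec_smul,
        smul_eq_mul]
      simp only [Nat.add_sub_cancel]
      rw [skew (C (n+1)) (C (n-1)), skew (C (n+1)) (C n), self0 (C (n+1)), self0 (C n),
        Edot (C (n+1)) (C (n-1)), Edot (C (n+1)) (C (n+1)), Edot (C n) (C n),
        Edot (C n) (C (n+2))]
      have hcm : E ⬝ᵥ (C (n+1) * C (n-1)) = E ⬝ᵥ (C (n-1) * C (n+1)) := by rw [mul_comm]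
      rw [hcm]
      simp only [hg, ha, hb, hf, hs, Nat.add_sub_cancel]
      have hsp : Real.sqrt (((n:ℝ)+1)/2) * Real.sqrt (((n:ℝ)+1)/2) = ((n:ℝ)+1)/2 :=
        Real.mul_self_sqrt (by positivity)
      push_cast
      linear_combination (c * (E ⬝ᵥ (C n * C n)) - c * (E ⬝ᵥ (C (n+1) * C (n+1)))) * hsp
  rw [Finset.sum_congr rfl fun n hn => key n (Finset.mem_range.mp hn)]
  rw [Finset.sum_add_distrib, Finset.sum_range_sub' g]
  have hg0 : g 0 = 0 := by simp [hg, ha, hb, hs0]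
  have hgNv : g Nv = 0 := by
    obtain ⟨k, hk⟩ : ∃ k, Nv = k + 1 := ⟨Nv - 1, by omega⟩
    subst hk
    simp only [hg, ha, hb, Nat.add_sub_cancel, hCtop]
    simp
  rw [hg0, hgNv]
  -- square part
  have sq_sum : ∀ M : ℕ, 1 ≤ M → ∑ n ∈ range M, c * ((n : ℝ) / 2) * (f (n - 1) - f n)
      = c * ((1 / 2) * ∑ n ∈ range M, f n - ((M : ℝ) / 2) * f (M - 1)) := by
    intro M hM
    induction M, hM using Nat.le_induction with
    | base => simp [Finset.sum_range_succ]
    | succ M hM ih =>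
      rw [Finset.sum_range_succ, ih, Finset.sum_range_succ]
      have h1 : M + 1 - 1 = M := by omega
      have h2 : (M : ℝ) + 1 - 1 = (M : ℝ) := by ring
      rw [h1]
      push_cast
      ring
  rw [sq_sum Nv hNv]
  have hrhs : E ⬝ᵥ ((∑ n ∈ range Nv, C n * C n) - (Nv : ℝ) • (C (Nv - 1) * C (Nv - 1)))
      = (∑ n ∈ range Nv, f n) - (Nv : ℝ) * f (Nv - 1) := by
    rw [dotProduct_sub, dotProduct_smul]
    simp only [smul_eq_mul]
    congr 1
    · simp only [dotProduct, Finset.sum_apply, Finset.mul_sum, hf, Pi.mul_apply]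
      rw [Finset.sum_comm]
  rw [hrhs]
  have hq : q / (2 * m * α) = c / 2 := by rw [hc, div_div]; ring_nf
  rw [hq]
  ring
end

section
/- Linearization of Hermite products: for the physicist Hermite polynomials, H_m(x)·H_n(x) = Σ_{r=0}^{min(m,n)} 2^r r! C(m,r) C(n,r) H_{m+n-2r}(x), where C(·,·) denotes binomial coefficients. -/
noncomputable def c (m n r : ℕ) : ℝ :=
  2 ^ r * (r.factorial : ℝ) * (m.choose r : ℝ) * (n.choose r : ℝ)

lemma c_zero (m n : ℕ) : c m n 0 = 1 := by simp [c]

lemma c_eq_zero {m n r : ℕ} (h : ¬(r ≤ m ∧ r ≤ n)) : c m n r = 0 := by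
  rcases not_and_or.1 h with h | h
  · simp [c, Nat.choose_eq_zero_of_lt (Nat.lt_of_not_le h)]
  · simp [c, Nat.choose_eq_zero_of_lt (Nat.lt_of_not_le h)]

lemma H_rec (n : ℕ) (x : ℝ) :
    H (n + 2) x = 2 * x * H (n + 1) x - 2 * ((n : ℝ) + 1) * H n x := rfl

lemma mulx (k : ℕ) (x : ℝ) :
    2 * x * H k x = H (k + 1) x + 2 * (k : ℝ) * H (k - 1) x := by
  cases k with
  | zero => simp [H]
  | succ k =>
      rw [H_rec k x]
      simp only [Nat.add_sub_cancel]
      push_cast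
      ring

lemma sum_ext (m n K : ℕ) (x : ℝ) (h : min m n + 1 ≤ K) :
    ∑ r ∈ Finset.range (min m n + 1), c m n r * H (m + n - 2 * r) x
      = ∑ r ∈ Finset.range K, c m n r * H (m + n - 2 * r) x := by
  apply Finset.sum_subset (Finset.range_subset_range.2 h)
  intro r _ hr
  simp only [Finset.mem_range, not_lt] at hr
  rw [c_eq_zero (by omega), zero_mul]

lemma key (m n r : ℕ) :
    c (m + 2) n (r + 1) = c (m + 1) n (r + 1)
      + 2 * ((m + 1 + n - 2 * r : ℕ) : ℝ) * c (m + 1) n r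
      - 2 * ((m : ℝ) + 1) * c m n r := by
  by_cases hc : r ≤ m + 1 ∧ r ≤ n
  · obtain ⟨h1, h2⟩ := hc
    have e1 : ((m + 2).choose (r + 1) : ℝ)
        = ((m + 1).choose r : ℝ) + ((m + 1).choose (r + 1) : ℝ) := by
      rw [show m + 2 = (m + 1) + 1 from rfl, Nat.choose_succ_succ]
      push_cast; ring
    have e2 : (n.choose (r + 1) : ℝ) * ((r : ℝ) + 1)
        = (n.choose r : ℝ) * ((n : ℝ) - r) := by
      have := Nat.choose_succ_right_eq n r
      have hnr : ((n - r : ℕ) : ℝ) = (n : ℝ) - r := by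
        rw [Nat.cast_sub h2]
      calc (n.choose (r + 1) : ℝ) * ((r : ℝ) + 1)
          = ((n.choose (r + 1) * (r + 1) : ℕ) : ℝ) := by push_cast; ring
        _ = ((n.choose r * (n - r) : ℕ) : ℝ) := by rw [this]
        _ = (n.choose r : ℝ) * ((n : ℝ) - r) := by push_cast [Nat.cast_sub h2]; ring
    have e3 : ((m : ℝ) + 1) * (m.choose r : ℝ)
        = ((m + 1).choose r : ℝ) * ((m : ℝ) + 1 - r) := by
      have ha := Nat.add_one_mul_choose_eq m r
      have hb := Nat.choose_succ_right_eq (m + 1) r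
      calc ((m : ℝ) + 1) * (m.choose r : ℝ)
          = (((m + 1) * m.choose r : ℕ) : ℝ) := by push_cast; ring
        _ = (((m + 1).choose (r + 1) * (r + 1) : ℕ) : ℝ) := by
            rw [show (m + 1) * m.choose r = (m + 1).choose (r + 1) * (r + 1) from ha]
        _ = (((m + 1).choose r * (m + 1 - r) : ℕ) : ℝ) := by rw [hb]
        _ = ((m + 1).choose r : ℝ) * ((m : ℝ) + 1 - r) := by
            push_cast [Nat.cast_sub (by omega : r ≤ m + 1)]; ring
    have hW : ((m + 1 + n - 2 * r : ℕ) : ℝ) = (m : ℝ) + 1 + n - 2 * r := by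
      push_cast [Nat.cast_sub (by omega : 2 * r ≤ m + 1 + n)]; ring
    simp only [c, hW, Nat.factorial_succ, pow_succ]
    push_cast
    linear_combination
      (2 ^ r * 2 * (((r : ℝ) + 1) * (r.factorial : ℝ)) * (n.choose (r + 1) : ℝ)) * e1
      + (2 ^ r * 2 * (r.factorial : ℝ) * ((m + 1).choose r : ℝ)) * e2
      + (2 * 2 ^ r * (r.factorial : ℝ) * (n.choose r : ℝ)) * e3
  · rw [c_eq_zero (show ¬(r + 1 ≤ m + 2 ∧ r + 1 ≤ n) by omega),
      c_eq_zero (show ¬(r + 1 ≤ m + 1 ∧ r + 1 ≤ n) by omega),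
      c_eq_zero (show ¬(r ≤ m + 1 ∧ r ≤ n) from hc),
      c_eq_zero (show ¬(r ≤ m ∧ r ≤ n) by omega)]
    ring

theorem hermite_product_linearization (m n : ℕ) (x : ℝ) :
    H m x * H n x = ∑ r ∈ Finset.range (min m n + 1),
      (2 : ℝ) ^ r * (r.factorial : ℝ) * (m.choose r : ℝ) * (n.choose r : ℝ)
        * H (m + n - 2 * r) x := by
  have main : ∀ m, H m x * H n x
      = ∑ r ∈ Finset.range (min m n + 1), c m n r * H (m + n - 2 * r) x := by
    intro m
    induction m using Nat.twoStepInduction with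
    | zero => simp [H, c]
    | one =>
        cases n with
        | zero => simp [H, c]
        | succ k =>
            have hmin : min 1 (k + 1) = 1 := by omega
            rw [hmin, Finset.sum_range_succ, Finset.sum_range_one]
            have h1 : H 1 x = 2 * x := rfl
            rw [h1, mulx (k + 1) x]
            simp only [Nat.add_sub_cancel]
            have i0 : 1 + (k + 1) - 2 * 0 = k + 2 := by omega
            have i1 : 1 + (k + 1) - 2 * 1 = k := by omega
            rw [i0, i1]
            simp [c, Nat.choose_one_right]
    | more m ih1 ih2 =>
        set K := m + n + 2 with hK
        have h2x : H (m + 2) x * H n x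
            = 2 * x * (H (m + 1) x * H n x) - 2 * ((m : ℝ) + 1) * (H m x * H n x) := by
          rw [H_rec]; ring
        rw [h2x, ih1, ih2,
          sum_ext (m + 1) n K x (by omega), sum_ext m n K x (by omega),
          sum_ext (m + 2) n (K + 1) x (by omega),
          Finset.mul_sum, Finset.mul_sum]
        have step1 : ∀ r ∈ Finset.range K,
            2 * x * (c (m + 1) n r * H (m + 1 + n - 2 * r) x)
              = c (m + 1) n r * H (m + 2 + n - 2 * r) x
                + 2 * ((m + 1 + n - 2 * r : ℕ) : ℝ) * c (m + 1) n r * H (m + n - 2 * r) x := by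
          intro r _
          by_cases hc : r ≤ m + 1 ∧ r ≤ n
          · have i1 : (m + 1 + n - 2 * r) + 1 = m + 2 + n - 2 * r := by omega
            have i2 : (m + 1 + n - 2 * r) - 1 = m + n - 2 * r := by omega
            calc 2 * x * (c (m + 1) n r * H (m + 1 + n - 2 * r) x)
                = c (m + 1) n r * (2 * x * H (m + 1 + n - 2 * r) x) := by ring
              _ = _ := by rw [mulx, i1, i2]; ring
          · simp [c_eq_zero hc]
        rw [Finset.sum_congr rfl step1, Finset.sum_add_distrib]
        have hA : ∑ r ∈ Finset.range K, c (m + 1) n r * H (m + 2 + n - 2 * r) x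
            = ∑ r ∈ Finset.range (K + 1), c (m + 1) n r * H (m + 2 + n - 2 * r) x := by
          rw [Finset.sum_range_succ (fun r => c (m + 1) n r * H (m + 2 + n - 2 * r) x) K,
            c_eq_zero (show ¬(K ≤ m + 1 ∧ K ≤ n) by omega), zero_mul, add_zero]
        have hE : ∑ r ∈ Finset.range (K + 1),
              (c (m + 2) n r - c (m + 1) n r) * H (m + 2 + n - 2 * r) x
            = ∑ r ∈ Finset.range K,
              (2 * ((m + 1 + n - 2 * r : ℕ) : ℝ) * c (m + 1) n r
                - 2 * ((m : ℝ) + 1) * c m n r) * H (m + n - 2 * r) x := by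
          rw [Finset.sum_range_succ']
          rw [c_zero, c_zero, sub_self, zero_mul, add_zero]
          refine Finset.sum_congr rfl fun r _ => ?_
          have i : m + 2 + n - 2 * (r + 1) = m + n - 2 * r := by omega
          rw [i, key m n r]
          ring
        have split : ∑ r ∈ Finset.range (K + 1), c (m + 2) n r * H (m + 2 + n - 2 * r) x
            = ∑ r ∈ Finset.range (K + 1), c (m + 1) n r * H (m + 2 + n - 2 * r) x
              + ∑ r ∈ Finset.range (K + 1),
                  (c (m + 2) n r - c (m + 1) n r) * H (m + 2 + n - 2 * r) x := by
          rw [← Finset.sum_add_distrib]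
          refine Finset.sum_congr rfl fun r _ => ?_
          ring
        rw [split, hE, ← hA]
        have hBC : ∑ r ∈ Finset.range K,
              2 * ((m + 1 + n - 2 * r : ℕ) : ℝ) * c (m + 1) n r * H (m + n - 2 * r) x
            - ∑ r ∈ Finset.range K, 2 * ((m : ℝ) + 1) * (c m n r * H (m + n - 2 * r) x)
            = ∑ r ∈ Finset.range K,
              (2 * ((m + 1 + n - 2 * r : ℕ) : ℝ) * c (m + 1) n r
                - 2 * ((m : ℝ) + 1) * c m n r) * H (m + n - 2 * r) x := by
          rw [← Finset.sum_sub_distrib]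
          refine Finset.sum_congr rfl fun r _ => ?_
          ring
        rw [add_sub_assoc, hBC]
  simp only [c] at main
  exact main m
end
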